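/- Let J satisfy hypothesis (H₀), let Ψ ∈ Γ_{p,q} with p ≥ q > 1 and ψ = Ψ', and let Ω ⊂ ℝ^N be bounded and open. Let u : ℝ^N → ℝ be measurable with F(u) < ∞ and E(u) < ∞. If ℰ(u;φ) ≥ 0 for every nonnegative measurable φ : ℝ^N → ℝ with F(φ) < ∞ and E(φ) < ∞, and u ≥ 0 a.e. in Ω^c, then u ≥ 0 a.e. in Ω (maximum principle). -/

import Mathlib

open MeasureTheory Set Filter

noncomputable section

/-- Hypothesis (H₀) on the kernel `J`. -/
def kernelH0 (N : ℕ) (J : EuclideanSpace ℝ (Fin N) → ℝ) (q₀ : ℝ) : Prop :=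
  Measurable J ∧ (∀ z : EuclideanSpace ℝ (Fin N), z ≠ 0 → 0 < J z) ∧
    (∀ z : EuclideanSpace ℝ (Fin N), J (-z) = J z) ∧
    (∫⁻ z in {z : EuclideanSpace ℝ (Fin N) | ‖z‖ < 1}, ENNReal.ofReal (J z)) = ⊤ ∧
    0 < q₀ ∧
    (∫⁻ z : EuclideanSpace ℝ (Fin N), ENNReal.ofReal (min 1 (‖z‖ ^ q₀) * J z)) < ⊤

/-- The class `Γ_{p,q}` of Young functions. -/
def memGamma (Ψ : ℝ → ℝ) (p q : ℝ) : Prop :=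
  ConvexOn ℝ Set.univ Ψ ∧ (∀ s, Ψ (-s) = Ψ s) ∧ ContDiff ℝ 1 Ψ ∧
    (∀ s, 0 ≤ Ψ s) ∧ Ψ 0 = 0 ∧ Ψ 1 = 1 ∧
    (∀ s : ℝ, s ≠ 0 → q ≤ s * deriv Ψ s / Ψ s ∧ s * deriv Ψ s / Ψ s ≤ p)

/-- `F(u) = ∫ Ψ(u)`. -/
def funcF (N : ℕ) (Ψ : ℝ → ℝ) (u : EuclideanSpace ℝ (Fin N) → ℝ) : ENNReal :=
  ∫⁻ x, ENNReal.ofReal (Ψ (u x))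

/-- `F(|∇u|) = ∫ Ψ(|∇u|)`. -/
def funcFgrad (N : ℕ) (Ψ : ℝ → ℝ) (u : EuclideanSpace ℝ (Fin N) → ℝ) : ENNReal :=
  ∫⁻ x, ENNReal.ofReal (Ψ ‖fderiv ℝ u x‖)

/-- `E(u) = (1/2) ∬ Ψ(u(x)-u(y)) J(x-y)`. -/
def funcE (N : ℕ) (Ψ : ℝ → ℝ) (J u : EuclideanSpace ℝ (Fin N) → ℝ) : ENNReal :=
  (1 / 2) * ∫⁻ x, ∫⁻ y, ENNReal.ofReal (Ψ (u x - u y) * J (x - y))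

/-- Interaction energy `ℰ(u;φ)` (real-valued). -/
def interE (N : ℕ) (ψ : ℝ → ℝ) (J u φ : EuclideanSpace ℝ (Fin N) → ℝ) : ℝ :=
  (1 / 2) * ∫ x, ∫ y, ψ (u x - u y) * (φ x - φ y) * J (x - y)

/-- Interaction energy `ℰ(u;φ)` (extended-nonnegative-valued version, for integrands
of constant sign). -/
def interEplus (N : ℕ) (ψ : ℝ → ℝ) (J u φ : EuclideanSpace ℝ (Fin N) → ℝ) : ENNReal :=
  (1 / 2) * ∫⁻ x, ∫⁻ y, ENNReal.ofReal (ψ (u x - u y) * (φ x - φ y) * J (x - y))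

/-- The space `W₀^{J,Ψ}(Ω)`. -/
def memW0 (N : ℕ) (Ψ : ℝ → ℝ) (J : EuclideanSpace ℝ (Fin N) → ℝ)
    (Ω : Set (EuclideanSpace ℝ (Fin N))) (u : EuclideanSpace ℝ (Fin N) → ℝ) : Prop :=
  Measurable u ∧ funcF N Ψ u < ⊤ ∧ funcE N Ψ J u < ⊤ ∧ ∀ᵐ x ∂volume, x ∉ Ω → u x = 0

/-- `γ⁻_g(s) = inf_{x>0} g(sx)/g(x)`. -/
def gammaLow (g : ℝ → ℝ) (s : ℝ) : ℝ := sInf {r : ℝ | ∃ x : ℝ, 0 < x ∧ r = g (s * x) / g x}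

/-- `γ⁺_g(s) = sup_{x>0} g(sx)/g(x)`. -/
def gammaHigh (g : ℝ → ℝ) (s : ℝ) : ℝ := sSup {r : ℝ | ∃ x : ℝ, 0 < x ∧ r = g (s * x) / g x}

/-!
Test the inequality with `φ = u⁻`, which is admissible because `t ↦ t⁻` is 1-Lipschitz and `Ψ` is
monotone in `|t|`. As `ψ(s)` has the sign of `s` and `t ↦ t⁻` is antitone, the integrand
`ψ(u x - u y) (φ x - φ y) J(x - y)` is nonpositive, and it is dominated by
`p Ψ(u x - u y) J(x - y)`, so `ℰ(u; u⁻) ≥ 0` forces it to vanish for a.e. `(x, y)`. But it is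
strictly negative when `x ∈ Ω`, `u x < 0`, `y ∉ Ω`, `u y ≥ 0`, and `Ωᶜ` has positive measure
since `Ω` is bounded (the divergence of `J` at the origin excludes `N = 0`).
-/

lemma abs_negPart_sub_negPart_le {α : Type*} [AddCommGroup α] [LinearOrder α]
    [IsOrderedAddMonoid α] (a b : α) : |a⁻ - b⁻| ≤ |a - b| := by
  simpa only [negPart_def, neg_sub_neg, abs_sub_comm b a] using
    abs_max_sub_max_le_abs (-a) (-b) 0

namespace memGamma

variable {Ψ : ℝ → ℝ} {p q : ℝ}

lemma pos (hΨ : memGamma Ψ p q) (hq : 0 < q) {s : ℝ} (hs : s ≠ 0) : 0 < Ψ s := by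
  obtain ⟨-, -, -, hnonneg, -, -, hbound⟩ := hΨ
  refine (hnonneg s).lt_of_ne fun h => ?_
  have := (hbound s hs).1
  rw [← h, div_zero] at this
  linarith

lemma le_mul_deriv (hΨ : memGamma Ψ p q) (hq : 0 < q) (s : ℝ) : q * Ψ s ≤ s * deriv Ψ s := by
  have hpos : ∀ s ≠ 0, 0 < Ψ s := fun s hs => hΨ.pos hq hs
  obtain ⟨-, -, -, -, hzero, -, hbound⟩ := hΨ
  rcases eq_or_ne s 0 with rfl | hs
  · rw [hzero, zero_mul, mul_zero]
  · exact (le_div_iff₀ (hpos s hs)).1 (hbound s hs).1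

lemma mul_deriv_le (hΨ : memGamma Ψ p q) (hq : 0 < q) (s : ℝ) : s * deriv Ψ s ≤ p * Ψ s := by
  have hpos : ∀ s ≠ 0, 0 < Ψ s := fun s hs => hΨ.pos hq hs
  obtain ⟨-, -, -, -, hzero, -, hbound⟩ := hΨ
  rcases eq_or_ne s 0 with rfl | hs
  · rw [hzero, zero_mul, mul_zero]
  · exact (div_le_iff₀ (hpos s hs)).1 (hbound s hs).2

lemma mul_deriv_pos (hΨ : memGamma Ψ p q) (hq : 0 < q) {s : ℝ} (hs : s ≠ 0) :
    0 < s * deriv Ψ s :=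
  (mul_pos hq (hΨ.pos hq hs)).trans_le (hΨ.le_mul_deriv hq s)

lemma mul_deriv_nonneg (hΨ : memGamma Ψ p q) (hq : 0 < q) (s : ℝ) : 0 ≤ s * deriv Ψ s := by
  rcases eq_or_ne s 0 with rfl | hs
  · rw [zero_mul]
  · exact (hΨ.mul_deriv_pos hq hs).le

lemma deriv_neg (hΨ : memGamma Ψ p q) (hq : 0 < q) {s : ℝ} (hs : s < 0) : deriv Ψ s < 0 := by
  have := hΨ.mul_deriv_pos hq hs.ne
  nlinarith

lemma deriv_pos (hΨ : memGamma Ψ p q) (hq : 0 < q) {s : ℝ} (hs : 0 < s) : 0 < deriv Ψ s := by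
  have := hΨ.mul_deriv_pos hq hs.ne'
  nlinarith

lemma le_of_abs_le (hΨ : memGamma Ψ p q) {a b : ℝ} (hab : |a| ≤ |b|) : Ψ a ≤ Ψ b := by
  obtain ⟨hconv, heven, -, hnonneg, hzero, -⟩ := hΨ
  have habs : ∀ s, Ψ |s| = Ψ s := fun s => by
    rcases abs_choice s with h | h <;> simp only [h, heven]
  rw [← habs a, ← habs b]
  rcases (abs_nonneg a).eq_or_lt with ha | ha
  · rw [← ha, hzero]
    exact hnonneg _
  · -- `Ψ (-|a|) = Ψ |a|`, so by convexity `Ψ` cannot decrease to the right of `|a|`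
    refine hconv.le_right_of_left_le'' (mem_univ (-|a|)) (mem_univ _) (by linarith) hab ?_
    rw [heven]

lemma deriv_mul_negPart_sub_nonpos (hΨ : memGamma Ψ p q) (hq : 0 < q) (a b : ℝ) :
    deriv Ψ (a - b) * (a⁻ - b⁻) ≤ 0 := by
  rcases lt_trichotomy a b with hab | rfl | hab
  · have hanti : b⁻ ≤ a⁻ := negPart_anti hab.le
    exact mul_nonpos_of_nonpos_of_nonneg (hΨ.deriv_neg hq (sub_neg.2 hab)).le (by linarith)
  · simp
  · have hanti : a⁻ ≤ b⁻ := negPart_anti hab.le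
    exact mul_nonpos_of_nonneg_of_nonpos (hΨ.deriv_pos hq (sub_pos.2 hab)).le (by linarith)

lemma abs_deriv_mul_negPart_sub_le (hΨ : memGamma Ψ p q) (hq : 0 < q) (a b : ℝ) :
    |deriv Ψ (a - b) * (a⁻ - b⁻)| ≤ p * Ψ (a - b) :=
  calc |deriv Ψ (a - b) * (a⁻ - b⁻)|
      ≤ |deriv Ψ (a - b)| * |a - b| := by
        rw [abs_mul]
        exact mul_le_mul_of_nonneg_left (abs_negPart_sub_negPart_le a b) (abs_nonneg _)
    _ = (a - b) * deriv Ψ (a - b) := by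
        rw [← abs_mul, mul_comm, abs_of_nonneg (hΨ.mul_deriv_nonneg hq _)]
    _ ≤ p * Ψ (a - b) := hΨ.mul_deriv_le hq _

lemma deriv_mul_negPart_sub_neg (hΨ : memGamma Ψ p q)
    (hq : 0 < q) {a b : ℝ} (ha : a < 0) (hb : 0 ≤ b) : deriv Ψ (a - b) * (a⁻ - b⁻) < 0 := by
  refine mul_neg_of_neg_of_pos (hΨ.deriv_neg hq (by linarith)) ?_
  rw [negPart_eq_neg.2 ha.le, negPart_eq_zero.2 hb]
  linarith

end memGamma

section Fubini

variable {α β : Type*} [MeasurableSpace α] [MeasurableSpace β] {μ : Measure α} {ν : Measure β}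

lemma integrable_uncurry_of_lintegral_lintegral_lt_top [SFinite ν] {f : α → β → ℝ}
    (hf : Measurable (Function.uncurry f)) (hf0 : ∀ x y, 0 ≤ f x y)
    (hfin : ∫⁻ x, ∫⁻ y, ENNReal.ofReal (f x y) ∂ν ∂μ < ⊤) :
    Integrable (Function.uncurry f) (μ.prod ν) := by
  refine ⟨hf.aestronglyMeasurable, ?_⟩
  rw [hasFiniteIntegral_iff_ofReal (f := Function.uncurry f) (ae_of_all _ fun z => hf0 z.1 z.2),
    lintegral_prod (fun z => ENNReal.ofReal (Function.uncurry f z))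
      (ENNReal.measurable_ofReal.comp hf).aemeasurable]
  exact hfin

lemma ae_ae_eq_zero_of_nonpos_of_integral_nonneg [SFinite μ] [SFinite ν] {g : α → β → ℝ}
    (hg : Integrable (Function.uncurry g) (μ.prod ν)) (hg0 : ∀ x y, g x y ≤ 0)
    (hint : 0 ≤ ∫ x, ∫ y, g x y ∂ν ∂μ) : ∀ᵐ x ∂μ, ∀ᵐ y ∂ν, g x y = 0 := by
  have hzero : ∫ z, -Function.uncurry g z ∂μ.prod ν = 0 := by
    rw [integral_neg, integral_prod _ hg]
    exact neg_eq_zero.2 (le_antisymm (integral_nonpos fun x => integral_nonpos (hg0 x)) hint)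
  have hae := (integral_eq_zero_iff_of_nonneg
    (fun z : α × β => neg_nonneg.2 (hg0 z.1 z.2)) hg.neg).1 hzero
  filter_upwards [Measure.ae_ae_of_ae_prod hae] with x hx
  filter_upwards [hx] with y hy
  exact neg_eq_zero.1 hy

end Fubini

section Euclidean

variable {N : ℕ} {J : EuclideanSpace ℝ (Fin N) → ℝ} {Ψ : ℝ → ℝ} {p q : ℝ}

lemma kernelH0.pos_dim {q₀ : ℝ} (hJ : kernelH0 N J q₀) : 0 < N := by
  obtain ⟨-, -, -, hdiv, -⟩ := hJ
  refine Nat.pos_of_ne_zero fun hN => ?_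
  subst hN
  have hball : {z : EuclideanSpace ℝ (Fin 0) | ‖z‖ < 1} = Metric.ball 0 1 := by
    ext; simp
  have hconst : ∫⁻ z in Metric.ball 0 1, ENNReal.ofReal (J z) =
      ENNReal.ofReal (J 0) * volume (Metric.ball (0 : EuclideanSpace ℝ (Fin 0)) 1) := by
    rw [← setLIntegral_const]
    congr with z
    rw [Subsingleton.elim z 0]
  rw [hball, hconst] at hdiv
  exact ENNReal.mul_ne_top ENNReal.ofReal_ne_top measure_ball_lt_top.ne hdiv

lemma volume_compl_ne_zero_of_isBounded (hN : 0 < N) {Ω : Set (EuclideanSpace ℝ (Fin N))}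
    (hΩ : Bornology.IsBounded Ω) : volume Ωᶜ ≠ 0 := by
  have : NeZero N := ⟨hN.ne'⟩
  intro h
  have huniv := measure_univ_le_add_compl (μ := volume) Ω
  rw [measure_univ_of_isAddLeftInvariant, h, add_zero, top_le_iff] at huniv
  exact hΩ.measure_lt_top.ne huniv

lemma funcF_le_of_abs_le (hΨ : memGamma Ψ p q) {u v : EuclideanSpace ℝ (Fin N) → ℝ}
    (h : ∀ x, |v x| ≤ |u x|) : funcF N Ψ v ≤ funcF N Ψ u :=
  lintegral_mono fun x => ENNReal.ofReal_le_ofReal (hΨ.le_of_abs_le (h x))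

lemma funcE_le_of_abs_sub_le (hΨ : memGamma Ψ p q) {u v : EuclideanSpace ℝ (Fin N) → ℝ}
    (h : ∀ x y, |v x - v y| ≤ |u x - u y|) : funcE N Ψ J v ≤ funcE N Ψ J u := by
  have ⟨_, _, _, hnonneg, _⟩ := hΨ
  refine mul_le_mul_right (lintegral_mono fun x => lintegral_mono fun y => ?_) _
  rcases le_total 0 (J (x - y)) with hJ | hJ
  · exact ENNReal.ofReal_le_ofReal (mul_le_mul_of_nonneg_right (hΨ.le_of_abs_le (h x y)) hJ)
  · rw [ENNReal.ofReal_of_nonpos (mul_nonpos_of_nonneg_of_nonpos (hnonneg _) hJ)]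
    exact zero_le

lemma ae_ae_deriv_mul_negPart_sub_eq_zero {q₀ : ℝ} (hJ : kernelH0 N J q₀)
    (hΨ : memGamma Ψ p q) (hq : 0 < q) {u : EuclideanSpace ℝ (Fin N) → ℝ} (hu : Measurable u)
    (huE : funcE N Ψ J u < ⊤) (hpos : 0 ≤ interE N (deriv Ψ) J u fun x => (u x)⁻) :
    ∀ᵐ x, ∀ᵐ y, deriv Ψ (u x - u y) * ((u x)⁻ - (u y)⁻) * J (x - y) = 0 := by
  obtain ⟨hJm, hJpos, -⟩ := hJ
  have hJne : ∀ x y, x ≠ y → 0 < J (x - y) := fun x y h => hJpos _ (sub_ne_zero.2 h)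
  have ⟨_, _, hC1, hΨnonneg, hΨzero, _⟩ := hΨ
  have hΨm : Measurable Ψ := hC1.continuous.measurable
  have hψm : Measurable (deriv Ψ) := (hC1.continuous_deriv le_rfl).measurable
  have hdens : Integrable (Function.uncurry fun x y => Ψ (u x - u y) * J (x - y))
      (volume.prod volume) := by
    refine integrable_uncurry_of_lintegral_lintegral_lt_top (by fun_prop) (fun x y => ?_) ?_
    · rcases eq_or_ne x y with rfl | hxy
      · simp [hΨzero]
      · exact mul_nonneg (hΨnonneg _) (hJne x y hxy).le
    · exact ENNReal.lt_top_of_mul_ne_top_right huE.ne (by norm_num)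
  have hg : Integrable (Function.uncurry fun x y =>
      deriv Ψ (u x - u y) * ((u x)⁻ - (u y)⁻) * J (x - y)) (volume.prod volume) := by
    refine (hdens.const_mul p).mono' (by fun_prop) (ae_of_all _ fun z => ?_)
    rw [Real.norm_eq_abs]
    rcases eq_or_ne z.1 z.2 with hxy | hxy
    · simp [Function.uncurry, hxy, hΨzero]
    · simp only [Function.uncurry, abs_mul, abs_of_pos (hJne _ _ hxy), ← mul_assoc]
      rw [← abs_mul]
      exact mul_le_mul_of_nonneg_right (hΨ.abs_deriv_mul_negPart_sub_le hq _ _) (hJne _ _ hxy).le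
  refine ae_ae_eq_zero_of_nonpos_of_integral_nonneg hg (fun x y => ?_) ?_
  · rcases eq_or_ne x y with rfl | hxy
    · simp
    · exact mul_nonpos_of_nonpos_of_nonneg (hΨ.deriv_mul_negPart_sub_nonpos hq _ _)
        (hJne x y hxy).le
  · unfold interE at hpos
    linarith

end Euclidean

theorem stmt15_general (N : ℕ) (q₀ : ℝ) (J : EuclideanSpace ℝ (Fin N) → ℝ) (hJ : kernelH0 N J q₀)
    (p q : ℝ) (hq : 1 < q) (Ψ : ℝ → ℝ) (hΨ : memGamma Ψ p q)
    (Ω : Set (EuclideanSpace ℝ (Fin N))) (hΩb : Bornology.IsBounded Ω)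
    (u : EuclideanSpace ℝ (Fin N) → ℝ) (hu : Measurable u)
    (huF : funcF N Ψ u < ⊤) (huE : funcE N Ψ J u < ⊤)
    (hpositivity : ∀ φ : EuclideanSpace ℝ (Fin N) → ℝ, Measurable φ → (∀ x, 0 ≤ φ x) →
      funcF N Ψ φ < ⊤ → funcE N Ψ J φ < ⊤ → 0 ≤ interE N (deriv Ψ) J u φ)
    (hext : ∀ᵐ x ∂volume, x ∉ Ω → 0 ≤ u x) :
    ∀ᵐ x ∂volume, x ∈ Ω → 0 ≤ u x := by
  have hq0 : 0 < q := by linarith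
  have hφF : funcF N Ψ (fun x => (u x)⁻) < ⊤ :=
    (funcF_le_of_abs_le hΨ fun x => by simpa using abs_negPart_sub_negPart_le (u x) 0).trans_lt huF
  have hφE : funcE N Ψ J (fun x => (u x)⁻) < ⊤ :=
    (funcE_le_of_abs_sub_le hΨ fun x y => abs_negPart_sub_negPart_le _ _).trans_lt huE
  have hzero := ae_ae_deriv_mul_negPart_sub_eq_zero hJ hΨ hq0 hu huE
    (hpositivity _ (by fun_prop) (fun x => negPart_nonneg _) hφF hφE)
  filter_upwards [hzero] with x hx hxΩ
  by_contra! hux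
  refine volume_compl_ne_zero_of_isBounded hJ.pos_dim hΩb (measure_eq_zero_iff_ae_notMem.2 ?_)
  filter_upwards [hx, hext] with y hy hyext hyΩ
  have hJxy : 0 < J (x - y) := hJ.2.1 _ (sub_ne_zero.2 fun h => hyΩ (h ▸ hxΩ))
  exact (mul_neg_of_neg_of_pos (hΨ.deriv_mul_negPart_sub_neg hq0 hux (hyext hyΩ)) hJxy).ne hy

theorem stmt15 (N : ℕ) (q₀ : ℝ) (J : EuclideanSpace ℝ (Fin N) → ℝ) (hJ : kernelH0 N J q₀)
    (p q : ℝ) (hq : 1 < q) (hpq : q ≤ p) (Ψ : ℝ → ℝ) (hΨ : memGamma Ψ p q)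
    (Ω : Set (EuclideanSpace ℝ (Fin N))) (hΩo : IsOpen Ω) (hΩb : Bornology.IsBounded Ω)
    (u : EuclideanSpace ℝ (Fin N) → ℝ) (hu : Measurable u)
    (huF : funcF N Ψ u < ⊤) (huE : funcE N Ψ J u < ⊤)
    (hpositivity : ∀ φ : EuclideanSpace ℝ (Fin N) → ℝ, Measurable φ → (∀ x, 0 ≤ φ x) →
      funcF N Ψ φ < ⊤ → funcE N Ψ J φ < ⊤ → 0 ≤ interE N (deriv Ψ) J u φ)
    (hext : ∀ᵐ x ∂volume, x ∉ Ω → 0 ≤ u x) :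
    ∀ᵐ x ∂volume, x ∈ Ω → 0 ≤ u x :=
  stmt15_general N q₀ J hJ p q hq Ψ hΨ Ω hΩb u hu huF huE hpositivity hext
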